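/- Let P(0) = 1/3 and P(n) = 2/(π² n²) for n ≠ 0. Then Σ_{n∈ℤ} P(n) = 1, and the ℓ-fold self-convolution satisfies P^{*ℓ}(0) = ∫_0^1 (4(x - 1/2)²)^ℓ dx = 1/(2ℓ+1). -/

import Mathlib

open Real

/-- Convolution of distributions on `ℤ`. -/
noncomputable def conv (P Q : ℤ → ℝ) : ℤ → ℝ := fun n => ∑' m : ℤ, P m * Q (n - m)

/-- `ℓ`-fold self-convolution (with `P^{*0}` the delta at `0`). -/
noncomputable def convIter (P : ℤ → ℝ) : ℕ → ℤ → ℝ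
  | 0 => fun n => if n = 0 then 1 else 0
  | (ℓ + 1) => conv P (convIter P ℓ)

/-!
Since `P` is even and summable, its cosine series `φ x = ∑ P m cos (2π m x)` converges uniformly
and the matching sine series vanishes. Expanding `cos (2π (n - m) x)` and exchanging sum and
integral by dominated convergence turns convolution with `P` into multiplication by `φ` on the
Fourier side, so `P^{*ℓ}(n) = ∫₀¹ φ(x)^ℓ cos (2π n x) dx`. For the weight at hand,
`∑_{n ≥ 1} cos (2π n x) / n² = π² B₂(x)` gives `φ x = 4 (x - 1/2)²` on `[0, 1]`; at `x = 0` this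
is `∑ P = 1`, and the substitution `u = 2x - 1` gives `∫₀¹ (2x - 1)^{2ℓ} dx = 1 / (2ℓ + 1)`.
-/

open MeasureTheory Set

noncomputable def cosSeries (P : ℤ → ℝ) (x : ℝ) : ℝ := ∑' m : ℤ, P m * cos (2 * π * m * x)

theorem integral_cos_two_pi_int_mul (n : ℤ) :
    ∫ x in (0 : ℝ)..1, cos (2 * π * n * x) = if n = 0 then 1 else 0 := by
  rcases eq_or_ne n 0 with rfl | hn
  · simp
  have hc : 2 * π * n ≠ 0 := by have := pi_ne_zero; positivity
  have hsin : sin (2 * π * n) = 0 := by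
    simpa [mul_comm, mul_left_comm] using sin_int_mul_pi (2 * n)
  simp [hn, intervalIntegral.integral_comp_mul_left cos hc, hsin]

section CosSeries

variable {P : ℤ → ℝ}

theorem summable_mul_of_abs_le_one (hP : Summable P) {f : ℤ → ℝ} (hf : ∀ m, |f m| ≤ 1) :
    Summable fun m => P m * f m :=
  hP.abs.of_norm_bounded fun m => by
    simpa [abs_mul] using mul_le_of_le_one_right (abs_nonneg (P m)) (hf m)

theorem continuous_cosSeries (hP : Summable P) : Continuous (cosSeries P) :=
  continuous_tsum (fun m => by fun_prop) hP.abs fun m x => by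
    simpa [abs_mul] using mul_le_of_le_one_right (abs_nonneg (P m)) (abs_cos_le_one _)

theorem hasSum_mul_sin_of_even (hP : Summable P) (heven : ∀ m, P (-m) = P m) (x : ℝ) :
    HasSum (fun m => P m * sin (2 * π * m * x)) 0 := by
  have hs := (summable_mul_of_abs_le_one hP fun m => abs_sin_le_one (2 * π * m * x)).hasSum
  have hpair := hs.nat_add_neg
  simp only [heven, Int.cast_neg, Int.cast_natCast, Int.cast_zero, mul_neg, neg_mul, sin_neg,
    add_neg_cancel, mul_zero, zero_mul, sin_zero, add_zero] at hpair
  rwa [hpair.unique hasSum_zero] at hs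

theorem hasSum_mul_cos_sub (hP : Summable P) (heven : ∀ m, P (-m) = P m) (n : ℤ) (x : ℝ) :
    HasSum (fun m : ℤ => P m * cos (2 * π * (n - m : ℤ) * x))
      (cosSeries P x * cos (2 * π * n * x)) := by
  have hcos := (summable_mul_of_abs_le_one hP fun m => abs_cos_le_one (2 * π * m * x)).hasSum
  have h := (hcos.mul_right (cos (2 * π * n * x))).add
    ((hasSum_mul_sin_of_even hP heven x).mul_right (sin (2 * π * n * x)))
  rw [zero_mul, add_zero] at h
  refine h.congr_fun fun m => ?_
  rw [Int.cast_sub, show 2 * π * (n - m : ℝ) * x = 2 * π * n * x - 2 * π * m * x by ring,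
    cos_sub]
  ring

theorem conv_integral_mul_cos (hP : Summable P) (heven : ∀ m, P (-m) = P m) {h : ℝ → ℝ}
    {a b : ℝ} (hh : IntervalIntegrable h volume a b) (n : ℤ) :
    conv P (fun k => ∫ x in a..b, h x * cos (2 * π * k * x)) n =
      ∫ x in a..b, h x * cosSeries P x * cos (2 * π * n * x) := by
  have hlim := intervalIntegral.hasSum_integral_of_dominated_convergence
    (μ := volume) (a := a) (b := b)
    (F := fun m x => P m * (h x * cos (2 * π * (n - m : ℤ) * x)))
    (f := fun x => h x * cosSeries P x * cos (2 * π * n * x))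
    (fun m x => |P m| * |h x|) (fun m => ?_) (fun m => ?_) ?_ ?_ ?_
  · refine (tsum_congr fun m => ?_).trans hlim.tsum_eq
    exact (intervalIntegral.integral_const_mul _ _).symm
  · exact ((hh.def'.aestronglyMeasurable.mul (by fun_prop : Continuous fun x =>
      cos (2 * π * (n - m : ℤ) * x)).aestronglyMeasurable).const_mul (P m))
  · refine .of_forall fun x _ => ?_
    rw [norm_mul, norm_mul, mul_assoc]
    exact mul_le_mul_of_nonneg_left (mul_le_of_le_one_right (norm_nonneg _) (abs_cos_le_one _))
      (norm_nonneg _)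
  · exact .of_forall fun x _ => hP.abs.mul_right |h x|
  · simpa only [tsum_mul_right, Real.norm_eq_abs] using hh.norm.const_mul (∑' m, |P m|)
  · refine .of_forall fun x _ => ?_
    simpa only [mul_left_comm (h x), mul_assoc] using
      (hasSum_mul_cos_sub hP heven n x).mul_left (h x)

theorem convIter_eq_integral_cosSeries_pow_mul_cos (hP : Summable P)
    (heven : ∀ m, P (-m) = P m) (ℓ : ℕ) (n : ℤ) :
    convIter P ℓ n = ∫ x in (0 : ℝ)..1, cosSeries P x ^ ℓ * cos (2 * π * n * x) := by
  induction ℓ generalizing n with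
  | zero => simp only [convIter, pow_zero, one_mul, integral_cos_two_pi_int_mul]
  | succ ℓ ih =>
    have hpow : IntervalIntegrable (fun x => cosSeries P x ^ ℓ) volume 0 1 :=
      ((continuous_cosSeries hP).pow ℓ).intervalIntegrable 0 1
    simp only [convIter, funext ih, conv_integral_mul_cos hP heven hpow, pow_succ]

end CosSeries

noncomputable def zeroShiftWeight (n : ℤ) : ℝ :=
  if n = 0 then 1 / 3 else 2 / (π ^ 2 * (n : ℝ) ^ 2)

theorem zeroShiftWeight_neg (n : ℤ) : zeroShiftWeight (-n) = zeroShiftWeight n := by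
  simp [zeroShiftWeight]

theorem hasSum_nat_zeroShiftWeight_mul_cos {x : ℝ} (hx : x ∈ Icc (0 : ℝ) 1) :
    HasSum (fun n : ℕ => zeroShiftWeight n * cos (2 * π * (n : ℤ) * x))
      (2 * (x ^ 2 - x + 6⁻¹) + 1 / 3) := by
  have hzeta := hasSum_one_div_nat_pow_mul_cos one_ne_zero hx
  rw [show ((Polynomial.bernoulli (2 * 1)).map (algebraMap ℚ ℝ)).eval x = x ^ 2 - x + 6⁻¹ from
    bernoulliFun_two x] at hzeta
  have h := (hzeta.mul_left (2 / π ^ 2)).add (hasSum_ite_eq 0 (1 / 3 : ℝ))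
  have hval : 2 / π ^ 2 * ((-1) ^ (1 + 1) * (2 * π) ^ (2 * 1) / 2 / ((2 * 1).factorial : ℝ) *
      (x ^ 2 - x + 6⁻¹)) + 1 / 3 = 2 * (x ^ 2 - x + 6⁻¹) + 1 / 3 := by
    norm_num [Nat.factorial]
    field_simp
  rw [hval] at h
  refine h.congr_fun fun n => ?_
  rcases eq_or_ne n 0 with rfl | hn
  · simp [zeroShiftWeight]
  · simp only [zeroShiftWeight, Int.natCast_eq_zero, hn, if_false, Int.cast_natCast, mul_one,
      one_div, add_zero]
    ring

theorem hasSum_zeroShiftWeight_mul_cos {x : ℝ} (hx : x ∈ Icc (0 : ℝ) 1) :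
    HasSum (fun m : ℤ => zeroShiftWeight m * cos (2 * π * m * x)) (4 * (x - 1 / 2) ^ 2) := by
  have hnat := hasSum_nat_zeroShiftWeight_mul_cos hx
  have hneg : HasSum (fun n : ℕ => zeroShiftWeight (-n) * cos (2 * π * (-n : ℤ) * x))
      (2 * (x ^ 2 - x + 6⁻¹) + 1 / 3) := by
    refine hnat.congr_fun fun n => ?_
    rw [zeroShiftWeight_neg, Int.cast_neg, mul_neg, neg_mul, cos_neg]
  have h := HasSum.of_nat_of_neg (f := fun m : ℤ => zeroShiftWeight m * cos (2 * π * m * x))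
    hnat hneg
  have hval : 2 * (x ^ 2 - x + 6⁻¹) + 1 / 3 + (2 * (x ^ 2 - x + 6⁻¹) + 1 / 3) -
      zeroShiftWeight 0 * cos (2 * π * (0 : ℤ) * x) = 4 * (x - 1 / 2) ^ 2 := by
    simp only [zeroShiftWeight, if_true, Int.cast_zero, mul_zero, zero_mul, cos_zero, mul_one]
    ring
  rwa [hval] at h

theorem summable_zeroShiftWeight : Summable zeroShiftWeight := by
  simpa using (hasSum_zeroShiftWeight_mul_cos (x := 0) (by simp)).summable

theorem tsum_zeroShiftWeight : ∑' n, zeroShiftWeight n = 1 := by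
  have h := hasSum_zeroShiftWeight_mul_cos (x := 0) (by simp)
  norm_num at h
  exact h.tsum_eq

theorem cosSeries_zeroShiftWeight {x : ℝ} (hx : x ∈ Icc (0 : ℝ) 1) :
    cosSeries zeroShiftWeight x = 4 * (x - 1 / 2) ^ 2 :=
  (hasSum_zeroShiftWeight_mul_cos hx).tsum_eq

theorem integral_four_mul_sub_half_sq_pow (ℓ : ℕ) :
    ∫ x in (0 : ℝ)..1, (4 * (x - 1 / 2) ^ 2) ^ ℓ = 1 / (2 * (ℓ : ℝ) + 1) := by
  have h : ∀ x : ℝ, (4 * (x - 1 / 2) ^ 2) ^ ℓ = (2 * x - 1) ^ (2 * ℓ) := fun x => by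
    rw [pow_mul]; ring
  simp_rw [h]
  have hodd : (-1 : ℝ) ^ (2 * ℓ + 1) = -1 := Odd.neg_one_pow ⟨ℓ, rfl⟩
  rw [intervalIntegral.integral_comp_mul_sub (fun x => x ^ (2 * ℓ)) two_ne_zero, integral_pow]
  simp only [mul_one, mul_zero, zero_sub, hodd, smul_eq_mul, Nat.cast_mul,
    Nat.cast_ofNat]
  field_simp
  ring

/-- For `P(0) = 1/3`, `P(n) = 2/(π²n²)` for `n ≠ 0`: `Σ P(n) = 1` and the
`ℓ`-fold self-convolution satisfies
`P^{*ℓ}(0) = ∫₀¹ (4(x-1/2)²)^ℓ dx = 1/(2ℓ+1)`. -/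
theorem stmt18
    (P : ℤ → ℝ) (hP : ∀ n : ℤ, P n = if n = 0 then 1 / 3 else 2 / (π ^ 2 * (n : ℝ) ^ 2)) :
    (∑' n : ℤ, P n) = 1 ∧
    ∀ ℓ : ℕ, 1 ≤ ℓ →
      convIter P ℓ 0 = ∫ x in (0 : ℝ)..1, (4 * (x - 1 / 2) ^ 2) ^ ℓ ∧
      convIter P ℓ 0 = 1 / (2 * (ℓ : ℝ) + 1) := by
  obtain rfl : P = zeroShiftWeight := funext hP
  refine ⟨tsum_zeroShiftWeight, fun ℓ _ => ?_⟩
  have hconv : convIter zeroShiftWeight ℓ 0 = ∫ x in (0 : ℝ)..1, (4 * (x - 1 / 2) ^ 2) ^ ℓ := by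
    rw [convIter_eq_integral_cosSeries_pow_mul_cos summable_zeroShiftWeight zeroShiftWeight_neg]
    refine intervalIntegral.integral_congr fun x hx => ?_
    rw [uIcc_of_le zero_le_one] at hx
    simp [cosSeries_zeroShiftWeight hx]
  exact ⟨hconv, hconv.trans (integral_four_mul_sub_half_sq_pow ℓ)⟩
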